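/- arXiv:1008.1439 — 3 statements merged into one kernel-verified Lean document; each statement's English description precedes it below -/
import Mathlib

section
/- For all non-negative real numbers u and v, there exists a constant C > 0 (depending only on u and v) such that for all n ≥ 2 and all x ∈ (0,1), the sum over k from 1 to n-1 of (k/n)^(-u) * (1 - k/n)^(-v) * C(n,k) * x^k * (1-x)^(n-k) is at most C * x^(-u) * (1-x)^(-v). -/
open Finset Real

/-!
For an integer `m`, `(n/k)^m C(n,k) ≤ (m+1)^m C(n+m,k+m)`, hence
`∑ (n/k)^m p_{n,k}(x) ≤ (m+1)^m x^(-m) ∑ p_{n+m,k+m}(x) ≤ (m+1)^m x^(-m)`; a real exponent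
`s ≤ m` follows by Jensen's inequality for the concave map `t ↦ t^(s/m)`. The two singular
factors are separated by Cauchy–Schwarz, and the one at `1` becomes the one at `0` under the
reflection `k ↦ n - k`, `x ↦ 1 - x`.
-/

namespace Nat

theorem pow_mul_choose_le_mul_choose_add {n k : ℕ} (m : ℕ) (hk : 1 ≤ k) :
    n ^ m * n.choose k ≤ (m + 1) ^ m * k ^ m * (n + m).choose (k + m) :=
  calc n ^ m * n.choose k ≤ (n + 1).ascFactorial m * n.choose k := by
        gcongr; exact (Nat.pow_le_pow_left n.le_succ m).trans (pow_succ_le_ascFactorial _ _)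
    _ = m ! * ((n + m).choose (k + m) * (k + m).choose m) := by
        rw [ascFactorial_eq_factorial_mul_choose, choose_mul (by omega), Nat.add_sub_cancel,
          Nat.add_sub_cancel, mul_assoc]
    _ = (k + 1).ascFactorial m * (n + m).choose (k + m) := by
        rw [ascFactorial_eq_factorial_mul_choose]; ring
    _ ≤ ((m + 1) * k) ^ m * (n + m).choose (k + m) := by
        gcongr
        exact (ascFactorial_le_pow_add k m).trans (Nat.pow_le_pow_left (by nlinarith) m)
    _ = (m + 1) ^ m * k ^ m * (n + m).choose (k + m) := by rw [mul_pow]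

end Nat

namespace bernsteinPolynomial

theorem eval_eq {R : Type*} [CommRing R] (n k : ℕ) (x : R) :
    (bernsteinPolynomial R n k).eval x = n.choose k * x ^ k * (1 - x) ^ (n - k) := by
  simp [bernsteinPolynomial]

theorem eval_nonneg (n k : ℕ) {x : ℝ} (h0 : 0 ≤ x) (h1 : x ≤ 1) :
    0 ≤ (bernsteinPolynomial ℝ n k).eval x := by
  rw [eval_eq]
  have := sub_nonneg.2 h1
  positivity

theorem sum_eval_le_one (n : ℕ) {s : Finset ℕ} (hs : s ⊆ range (n + 1)) {x : ℝ} (h0 : 0 ≤ x)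
    (h1 : x ≤ 1) : ∑ k ∈ s, (bernsteinPolynomial ℝ n k).eval x ≤ 1 :=
  calc ∑ k ∈ s, (bernsteinPolynomial ℝ n k).eval x
      ≤ ∑ k ∈ range (n + 1), (bernsteinPolynomial ℝ n k).eval x :=
        sum_le_sum_of_subset_of_nonneg hs fun k _ _ => eval_nonneg n k h0 h1
    _ = 1 := by rw [← Polynomial.eval_finsetSum, bernsteinPolynomial.sum, Polynomial.eval_one]

theorem eval_one_sub (n k : ℕ) (hk : k ≤ n) (x : ℝ) :
    (bernsteinPolynomial ℝ n k).eval (1 - x) = (bernsteinPolynomial ℝ n (n - k)).eval x := by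
  rw [← flip _ _ _ hk, Polynomial.eval_comp]
  simp

end bernsteinPolynomial

open bernsteinPolynomial

theorem Real.sum_mul_rpow_le_rpow_sum_mul {ι : Type*} (s : Finset ι) {w f : ι → ℝ}
    (hw : ∀ i, 0 ≤ w i) (hws : ∑ i ∈ s, w i ≤ 1) (hf : ∀ i, 0 ≤ f i) {t : ℝ} (ht0 : 0 ≤ t)
    (ht1 : t ≤ 1) : ∑ i ∈ s, w i * f i ^ t ≤ (∑ i ∈ s, w i * f i) ^ t := by
  rcases ht0.eq_or_lt with rfl | ht0
  · simpa using hws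
  have holder := inner_le_weight_mul_Lp_of_nonneg s (one_le_inv₀ ht0 |>.2 ht1) w
    (fun i => f i ^ t) hw fun i => rpow_nonneg (hf i) t
  simp_rw [← rpow_mul (hf _), inv_inv, mul_inv_cancel₀ ht0.ne', rpow_one] at holder
  calc ∑ i ∈ s, w i * f i ^ t
      ≤ (∑ i ∈ s, w i) ^ (1 - t) * (∑ i ∈ s, w i * f i) ^ t := holder
    _ ≤ 1 * (∑ i ∈ s, w i * f i) ^ t := by
        gcongr
        · exact rpow_nonneg (sum_nonneg fun i _ => mul_nonneg (hw i) (hf i)) t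
        · exact rpow_le_one (sum_nonneg fun i _ => hw i) hws (by linarith)
    _ = (∑ i ∈ s, w i * f i) ^ t := one_mul _

theorem Real.sq_sum_mul_mul_le {ι : Type*} (s : Finset ι) {w : ι → ℝ} (hw : ∀ i ∈ s, 0 ≤ w i)
    (f g : ι → ℝ) :
    (∑ i ∈ s, f i * g i * w i) ^ 2 ≤ (∑ i ∈ s, f i ^ 2 * w i) * ∑ i ∈ s, g i ^ 2 * w i :=
  sum_sq_le_sum_mul_sum_of_sq_le_mul s (fun i hi => mul_nonneg (sq_nonneg _) (hw i hi))
    (fun i hi => mul_nonneg (sq_nonneg _) (hw i hi)) fun i _ => le_of_eq (by ring)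

theorem sum_div_pow_mul_bernstein_le (n m : ℕ) {x : ℝ} (hx0 : 0 < x) (hx1 : x ≤ 1) :
    ∑ k ∈ Ico 1 n, ((n : ℝ) / k) ^ m * (bernsteinPolynomial ℝ n k).eval x
      ≤ (m + 1) ^ m / x ^ m := by
  have hshift : ∀ k ∈ Ico 1 n, ((n : ℝ) / k) ^ m * (bernsteinPolynomial ℝ n k).eval x
      ≤ (m + 1) ^ m / x ^ m * (bernsteinPolynomial ℝ (n + m) (k + m)).eval x := by
    intro k hk
    have hk1 := (mem_Ico.1 hk).1
    have hk0 : (0 : ℝ) < k := by exact_mod_cast hk1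
    have hcoef : (n : ℝ) ^ m * n.choose k ≤ (m + 1) ^ m * k ^ m * (n + m).choose (k + m) := by
      exact_mod_cast Nat.pow_mul_choose_le_mul_choose_add m hk1
    have hpos : 0 ≤ x ^ k * (1 - x) ^ (n - k) := by have := sub_nonneg.2 hx1; positivity
    rw [eval_eq, eval_eq, show n + m - (k + m) = n - k by omega, pow_add]
    calc ((n : ℝ) / k) ^ m * (n.choose k * x ^ k * (1 - x) ^ (n - k))
        = (n : ℝ) ^ m * n.choose k / k ^ m * (x ^ k * (1 - x) ^ (n - k)) := by ring
      _ ≤ (m + 1) ^ m * k ^ m * (n + m).choose (k + m) / k ^ m * (x ^ k * (1 - x) ^ (n - k)) := by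
        gcongr
      _ = (m + 1) ^ m / x ^ m * ((n + m).choose (k + m) * (x ^ k * x ^ m) * (1 - x) ^ (n - k)) := by
        field_simp
  calc ∑ k ∈ Ico 1 n, ((n : ℝ) / k) ^ m * (bernsteinPolynomial ℝ n k).eval x
      ≤ ∑ k ∈ Ico 1 n, (m + 1) ^ m / x ^ m * (bernsteinPolynomial ℝ (n + m) (k + m)).eval x :=
        sum_le_sum hshift
    _ = (m + 1) ^ m / x ^ m *
          ∑ j ∈ Ico (1 + m) (n + m), (bernsteinPolynomial ℝ (n + m) j).eval x := by
        rw [mul_sum, ← map_add_right_Ico, sum_map]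
        rfl
    _ ≤ (m + 1) ^ m / x ^ m * 1 := by
        gcongr
        exact sum_eval_le_one _ (fun j hj => by simp only [mem_Ico, mem_range] at hj ⊢; omega)
          hx0.le hx1
    _ = (m + 1) ^ m / x ^ m := mul_one _

theorem sum_rpow_neg_mul_bernstein_le {u : ℝ} {m : ℕ} (hu : 0 ≤ u) (hm : 0 < m) (hum : u ≤ m)
    (n : ℕ) {x : ℝ} (hx0 : 0 < x) (hx1 : x ≤ 1) :
    ∑ k ∈ Ico 1 n, ((k : ℝ) / n) ^ (-u) * (bernsteinPolynomial ℝ n k).eval x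
      ≤ (m + 1) ^ u * x ^ (-u) := by
  have hm₀ : (0 : ℝ) < m := by exact_mod_cast hm
  have hroot : ∀ a : ℝ, 0 ≤ a → (a ^ m) ^ (u / m) = a ^ u := fun a ha => by
    rw [← rpow_natCast, ← rpow_mul ha, mul_div_cancel₀ _ hm₀.ne']
  calc ∑ k ∈ Ico 1 n, ((k : ℝ) / n) ^ (-u) * (bernsteinPolynomial ℝ n k).eval x
      = ∑ k ∈ Ico 1 n, (bernsteinPolynomial ℝ n k).eval x * (((n : ℝ) / k) ^ m) ^ (u / m) := by
        refine sum_congr rfl fun k _ => ?_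
        rw [hroot _ (by positivity), rpow_neg (by positivity), ← inv_rpow (by positivity), inv_div,
          mul_comm]
    _ ≤ (∑ k ∈ Ico 1 n, (bernsteinPolynomial ℝ n k).eval x * ((n : ℝ) / k) ^ m) ^ (u / m) :=
        sum_mul_rpow_le_rpow_sum_mul _ (fun k => eval_nonneg n k hx0.le hx1)
          (sum_eval_le_one n (fun k hk => by simp only [mem_Ico, mem_range] at hk ⊢; omega)
            hx0.le hx1)
          (fun k => by positivity) (by positivity) (div_le_one_of_le₀ hum hm₀.le)
    _ ≤ ((m + 1) ^ m / x ^ m) ^ (u / m) := by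
        gcongr
        · exact sum_nonneg fun k _ => mul_nonneg (eval_nonneg n k hx0.le hx1) (by positivity)
        · simp_rw [mul_comm ((bernsteinPolynomial ℝ n _).eval x)]
          exact sum_div_pow_mul_bernstein_le n m hx0 hx1
    _ = (m + 1) ^ u * x ^ (-u) := by
        rw [div_rpow (by positivity) (by positivity), hroot _ (by positivity), hroot _ hx0.le,
          rpow_neg hx0.le, div_eq_mul_inv]

theorem sum_comp_one_sub_mul_bernstein_eq (φ : ℝ → ℝ) (n : ℕ) (x : ℝ) :
    ∑ k ∈ Ico 1 n, φ (1 - (k : ℝ) / n) * (bernsteinPolynomial ℝ n k).eval x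
      = ∑ k ∈ Ico 1 n, φ ((k : ℝ) / n) * (bernsteinPolynomial ℝ n k).eval (1 - x) := by
  have reflect := sum_Ico_reflect
    (fun k => φ ((k : ℝ) / n) * (bernsteinPolynomial ℝ n k).eval (1 - x)) 1 n.le_succ
  rw [Nat.add_sub_cancel_left, Nat.add_sub_cancel] at reflect
  rw [← reflect]
  refine sum_congr rfl fun k hk => ?_
  have hkn : k ≤ n := (mem_Ico.1 hk).2.le
  have hn : (n : ℝ) ≠ 0 := Nat.cast_ne_zero.2 (by grind)
  rw [eval_one_sub n _ (n.sub_le k), Nat.sub_sub_self hkn, Nat.cast_sub hkn, sub_div, div_self hn]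

theorem Real.rpow_two_mul {a : ℝ} (ha : 0 ≤ a) (y : ℝ) : a ^ (2 * y) = (a ^ y) ^ 2 := by
  rw [mul_comm, ← rpow_mul_natCast ha]
  norm_num

theorem bernstein_weighted_moment_bound (u v : ℝ) (hu : 0 ≤ u) (hv : 0 ≤ v) :
    ∃ C > 0, ∀ n : ℕ, 2 ≤ n → ∀ x ∈ Set.Ioo (0:ℝ) 1,
      ∑ k ∈ Finset.Ico 1 n,
        ((k:ℝ)/n) ^ (-u) * (1 - (k:ℝ)/n) ^ (-v) * (n.choose k : ℝ) * x ^ k * (1-x) ^ (n-k)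
      ≤ C * x ^ (-u) * (1-x) ^ (-v) := by
  obtain ⟨p, hp, hup⟩ : ∃ p : ℕ, 0 < p ∧ 2 * u ≤ p :=
    ⟨⌈2 * u⌉₊ + 1, by omega, (Nat.le_ceil _).trans (by simp)⟩
  obtain ⟨q, hq, hvq⟩ : ∃ q : ℕ, 0 < q ∧ 2 * v ≤ q :=
    ⟨⌈2 * v⌉₊ + 1, by omega, (Nat.le_ceil _).trans (by simp)⟩
  refine ⟨(p + 1) ^ u * (q + 1) ^ v, by positivity, fun n _ x ⟨hx0, hx1⟩ => ?_⟩
  have hx1' : 0 < 1 - x := sub_pos.2 hx1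
  have hleft := sum_rpow_neg_mul_bernstein_le (by positivity) hp hup n hx0 hx1.le
  have hright := sum_rpow_neg_mul_bernstein_le (by positivity) hq hvq n hx1' (by linarith)
  simp_rw [neg_mul_eq_mul_neg (2 : ℝ)] at hleft hright
  rw [sum_congr rfl fun k _ => by rw [rpow_two_mul (by positivity)]] at hleft hright
  rw [← sum_comp_one_sub_mul_bernstein_eq (fun a => (a ^ (-v)) ^ 2)] at hright
  refine le_of_pow_le_pow_left₀ two_ne_zero (by positivity) ?_
  calc (∑ k ∈ Ico 1 n,
        ((k:ℝ)/n) ^ (-u) * (1 - (k:ℝ)/n) ^ (-v) * (n.choose k : ℝ) * x ^ k * (1-x) ^ (n-k)) ^ 2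
      = (∑ k ∈ Ico 1 n,
          ((k:ℝ)/n) ^ (-u) * (1 - (k:ℝ)/n) ^ (-v) * (bernsteinPolynomial ℝ n k).eval x) ^ 2 := by
        simp only [eval_eq, mul_assoc]
    _ ≤ (∑ k ∈ Ico 1 n, (((k:ℝ)/n) ^ (-u)) ^ 2 * (bernsteinPolynomial ℝ n k).eval x) *
          ∑ k ∈ Ico 1 n, ((1 - (k:ℝ)/n) ^ (-v)) ^ 2 * (bernsteinPolynomial ℝ n k).eval x :=
        sq_sum_mul_mul_le _ (fun k _ => eval_nonneg n k hx0.le hx1.le) _ _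
    _ ≤ ((p + 1) ^ (2 * u) * x ^ (2 * -u)) * ((q + 1) ^ (2 * v) * (1 - x) ^ (2 * -v)) :=
        mul_le_mul hleft hright (sum_nonneg fun k _ => mul_nonneg (by positivity)
          (eval_nonneg n k hx0.le hx1.le)) (by positivity)
    _ = ((p + 1) ^ u * (q + 1) ^ v * x ^ (-u) * (1 - x) ^ (-v)) ^ 2 := by
        rw [rpow_two_mul (a := p + 1) (by positivity), rpow_two_mul (a := q + 1) (by positivity),
          rpow_two_mul hx0.le, rpow_two_mul hx1'.le]
        ring
end

section
/- Let w(x) = x^α(1-x)^β with α, β > 0 and let f ∈ C_w, i.e. f is continuous on (0,1) and w·f extends continuously to [0,1] with value 0 at the endpoints. Then for every n ≥ 1, sup_{x ∈ (0,1)} w(x) · Σ_{k=1}^{n-1} |f(k/n)| p_{n,k}(x) ≤ C ‖w f‖_∞ for a constant C depending only on α, β, where ‖w f‖_∞ = sup_{x∈(0,1)} |w(x) f(x)|. -/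
/-!
Write `w x = x ^ α * (1 - x) ^ β`. For `0 < k < n`,
`w x = (n x / k) ^ α * (n (1 - x) / (n - k)) ^ β * w (k / n)`, and by AM-GM the product of the two
ratios is at most `(n x / k) ^ (2 α) + (n (1 - x) / (n - k)) ^ (2 β)`. So it suffices to bound the
moments `∑ p_{n,k}(x) (n x / k) ^ γ` uniformly in `n` and `x`. For an integer `γ = m` this follows
from `C(n, k) (n / k) ^ m ≤ (m + 1) ^ m C(n + m, k + m)`, which turns the moment into a partial sum
of the Bernstein basis of degree `n + m`; a real `γ` is reduced to `⌈γ⌉`, and the second ratio is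
the first one under `k ↦ n - k`, `x ↦ 1 - x`. Finally `‖w f‖_∞` is finite because `w f` extends
continuously to `[0, 1]`.
-/

open Finset Real
open scoped Topology

theorem div_mul_choose_le_mul_choose_succ {n k m M : ℕ} (hk : 1 ≤ k) (hm : m < M) :
    (n / k : ℝ) * (n + m).choose (k + m) ≤ (M + 1) * (n + m + 1).choose (k + m + 1) := by
  have hpascal : ((n + m + 1 : ℕ) : ℝ) * (n + m).choose (k + m)
      = (n + m + 1).choose (k + m + 1) * ((k + m + 1 : ℕ) : ℝ) := by
    exact_mod_cast Nat.add_one_mul_choose_eq (n + m) (k + m)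
  have hkm : (k + m + 1 : ℝ) ≤ (M + 1) * k := by
    have : (k + m + 1 : ℕ) ≤ (M + 1) * k := by nlinarith
    exact_mod_cast this
  have hk0 : (0 : ℝ) < k := by exact_mod_cast hk
  push_cast at hpascal
  rw [div_mul_eq_mul_div, div_le_iff₀ hk0]
  nlinarith [mul_le_mul_of_nonneg_left hkm
    (by positivity : (0 : ℝ) ≤ n * (n + m).choose (k + m)),
    (by positivity : (0 : ℝ) ≤ (m + 1) * (n + m).choose (k + m) * (M + 1) * k)]

theorem choose_mul_div_pow_le {n k M : ℕ} (hk : 1 ≤ k) :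
    ∀ m ≤ M, (n.choose k : ℝ) * (n / k : ℝ) ^ m ≤ (M + 1) ^ m * (n + m).choose (k + m) := by
  intro m
  induction m with
  | zero => simp
  | succ m ih =>
    intro hm
    calc (n.choose k : ℝ) * (n / k : ℝ) ^ (m + 1)
        = (n.choose k * (n / k : ℝ) ^ m) * (n / k : ℝ) := by ring
      _ ≤ ((M + 1) ^ m * (n + m).choose (k + m)) * (n / k : ℝ) :=
        mul_le_mul_of_nonneg_right (ih (by omega)) (by positivity)
      _ = (M + 1) ^ m * ((n / k : ℝ) * (n + m).choose (k + m)) := by ring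
      _ ≤ (M + 1) ^ m * ((M + 1) * (n + m + 1).choose (k + m + 1)) :=
        mul_le_mul_of_nonneg_left (div_mul_choose_le_mul_choose_succ hk hm) (by positivity)
      _ = (M + 1) ^ (m + 1) * (n + (m + 1)).choose (k + (m + 1)) := by
        rw [← add_assoc, ← add_assoc]; ring

theorem sum_choose_mul_pow_le_one {N : ℕ} {s : Finset ℕ} (hs : s ⊆ range (N + 1)) {x : ℝ}
    (hx : x ∈ Set.Icc (0 : ℝ) 1) :
    ∑ K ∈ s, (N.choose K : ℝ) * x ^ K * (1 - x) ^ (N - K) ≤ 1 := by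
  obtain ⟨hx0, hx1⟩ := hx
  have h1x : 0 ≤ 1 - x := by linarith
  calc ∑ K ∈ s, (N.choose K : ℝ) * x ^ K * (1 - x) ^ (N - K)
      ≤ ∑ K ∈ range (N + 1), (N.choose K : ℝ) * x ^ K * (1 - x) ^ (N - K) :=
        sum_le_sum_of_subset_of_nonneg hs fun _ _ _ ↦ by positivity
    _ = (x + (1 - x)) ^ N := by rw [add_pow]; exact sum_congr rfl fun _ _ ↦ by ring
    _ = 1 := by simp

theorem sum_bernstein_mul_pow_le (m n : ℕ) {x : ℝ} (hx : x ∈ Set.Icc (0 : ℝ) 1) :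
    ∑ k ∈ Ico 1 n, (n.choose k : ℝ) * x ^ k * (1 - x) ^ (n - k) * (n * x / k) ^ m
      ≤ (m + 1) ^ m := by
  have h1x : 0 ≤ 1 - x := by linarith [hx.2]
  have hx0 := hx.1
  calc ∑ k ∈ Ico 1 n, (n.choose k : ℝ) * x ^ k * (1 - x) ^ (n - k) * (n * x / k) ^ m
      = ∑ k ∈ Ico 1 n, (n.choose k : ℝ) * (n / k : ℝ) ^ m * (x ^ (k + m) * (1 - x) ^ (n - k)) :=
        sum_congr rfl fun _ _ ↦ by ring
    _ ≤ ∑ k ∈ Ico 1 n, (m + 1) ^ m * ((n + m).choose (k + m) : ℝ)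
          * (x ^ (k + m) * (1 - x) ^ (n - k)) :=
        sum_le_sum fun k hk ↦ mul_le_mul_of_nonneg_right
          (choose_mul_div_pow_le (mem_Ico.1 hk).1 m le_rfl) (by positivity)
    _ = (m + 1) ^ m * ∑ K ∈ Ico (1 + m) (n + m),
          ((n + m).choose K : ℝ) * x ^ K * (1 - x) ^ (n + m - K) := by
        rw [← sum_Ico_add', mul_sum]
        exact sum_congr rfl fun k _ ↦ by rw [Nat.add_sub_add_right]; ring
    _ ≤ (m + 1) ^ m := by
        refine mul_le_of_le_one_right (by positivity) (sum_choose_mul_pow_le_one ?_ hx)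
        intro K hK; simp only [mem_Ico, mem_range] at hK ⊢; omega

theorem rpow_le_one_add_pow_ceil {t γ : ℝ} (ht : 0 ≤ t) (hγ : 0 ≤ γ) :
    t ^ γ ≤ 1 + t ^ ⌈γ⌉₊ := by
  rcases le_or_gt t 1 with ht1 | ht1
  · linarith [rpow_le_one ht ht1 hγ, pow_nonneg ht ⌈γ⌉₊]
  · have := rpow_le_rpow_of_exponent_le ht1.le (Nat.le_ceil γ)
    rw [rpow_natCast] at this
    linarith

noncomputable def bernsteinMomentBound (γ : ℝ) : ℝ := 1 + (⌈γ⌉₊ + 1) ^ ⌈γ⌉₊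

theorem bernsteinMomentBound_pos (γ : ℝ) : 0 < bernsteinMomentBound γ := by
  unfold bernsteinMomentBound; positivity

theorem sum_bernstein_mul_rpow_le {γ : ℝ} (hγ : 0 ≤ γ) (n : ℕ) {x : ℝ}
    (hx : x ∈ Set.Icc (0 : ℝ) 1) :
    ∑ k ∈ Ico 1 n, (n.choose k : ℝ) * x ^ k * (1 - x) ^ (n - k) * (n * x / k) ^ γ
      ≤ bernsteinMomentBound γ := by
  have h1x : 0 ≤ 1 - x := by linarith [hx.2]
  have hx0 := hx.1
  calc ∑ k ∈ Ico 1 n, (n.choose k : ℝ) * x ^ k * (1 - x) ^ (n - k) * (n * x / k) ^ γ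
      ≤ ∑ k ∈ Ico 1 n, (n.choose k : ℝ) * x ^ k * (1 - x) ^ (n - k) * (1 + (n * x / k) ^ ⌈γ⌉₊) :=
        sum_le_sum fun k _ ↦ mul_le_mul_of_nonneg_left
          (rpow_le_one_add_pow_ceil (by positivity) hγ) (by positivity)
    _ = ∑ k ∈ Ico 1 n, (n.choose k : ℝ) * x ^ k * (1 - x) ^ (n - k) * (n * x / k) ^ 0
        + ∑ k ∈ Ico 1 n, (n.choose k : ℝ) * x ^ k * (1 - x) ^ (n - k) * (n * x / k) ^ ⌈γ⌉₊ := by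
        rw [← sum_add_distrib]; exact sum_congr rfl fun _ _ ↦ by ring
    _ ≤ (0 + 1) ^ 0 + (⌈γ⌉₊ + 1) ^ ⌈γ⌉₊ := by
        gcongr <;> exact_mod_cast sum_bernstein_mul_pow_le _ n hx
    _ = bernsteinMomentBound γ := by simp [bernsteinMomentBound]

theorem sum_bernstein_mul_rpow_le' {γ : ℝ} (hγ : 0 ≤ γ) (n : ℕ) {x : ℝ}
    (hx : x ∈ Set.Icc (0 : ℝ) 1) :
    ∑ k ∈ Ico 1 n, (n.choose k : ℝ) * x ^ k * (1 - x) ^ (n - k) * (n * (1 - x) / (n - k : ℕ)) ^ γ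
      ≤ bernsteinMomentBound γ := by
  have hx' : 1 - x ∈ Set.Icc (0 : ℝ) 1 := ⟨by linarith [hx.2], by linarith [hx.1]⟩
  convert sum_bernstein_mul_rpow_le hγ n hx' using 1
  have hreflect := sum_Ico_reflect (fun k ↦ (n.choose k : ℝ) * (1 - x) ^ k * (1 - (1 - x)) ^ (n - k)
    * (n * (1 - x) / k) ^ γ) 1 (Nat.le_succ n)
  rw [Nat.add_sub_cancel_left, Nat.add_sub_cancel] at hreflect
  rw [← hreflect]
  refine sum_congr rfl fun k hk ↦ ?_
  have hkn : k ≤ n := (mem_Ico.1 hk).2.le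
  rw [Nat.sub_sub_self hkn, Nat.choose_symm hkn, sub_sub_cancel]
  ring

theorem rpow_mul_rpow_le_rpow_two_mul_add {s t : ℝ} (hs : 0 ≤ s) (ht : 0 ≤ t) (α β : ℝ) :
    s ^ α * t ^ β ≤ s ^ (2 * α) + t ^ (2 * β) := by
  rw [mul_comm 2 α, mul_comm 2 β, rpow_mul hs, rpow_mul ht, rpow_two, rpow_two]
  nlinarith [two_mul_le_add_sq (s ^ α) (t ^ β), rpow_nonneg hs α, rpow_nonneg ht β,
    mul_nonneg (rpow_nonneg hs α) (rpow_nonneg ht β)]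

theorem jacobi_weight_eq_mul_weight_node (α β : ℝ) {n k : ℕ} (hk : k ∈ Ico 1 n) {x : ℝ}
    (hx : x ∈ Set.Icc (0 : ℝ) 1) :
    x ^ α * (1 - x) ^ β = (n * x / k) ^ α * (n * (1 - x) / (n - k : ℕ)) ^ β
      * ((k / n : ℝ) ^ α * (1 - k / n : ℝ) ^ β) := by
  obtain ⟨hk1, hkn⟩ := mem_Ico.1 hk
  have hk0 : (0 : ℝ) < k := by exact_mod_cast hk1
  have hn0 : (0 : ℝ) < n := by exact_mod_cast Nat.zero_lt_of_lt hkn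
  have hnk : (0 : ℝ) < (n - k : ℕ) := by exact_mod_cast Nat.sub_pos_of_lt hkn
  have h1x : 0 ≤ 1 - x := by linarith [hx.2]
  have hx0 := hx.1
  have hnode : (1 - k / n : ℝ) = (n - k : ℕ) / n := by
    rw [Nat.cast_sub hkn.le]; field_simp
  rw [hnode, mul_mul_mul_comm, ← mul_rpow (by positivity) (by positivity),
    ← mul_rpow (by positivity) (by positivity)]
  congr 2 <;> field_simp

theorem bddAbove_abs_image_Ioo {g : ℝ → ℝ} {a b la lb : ℝ} (hab : a < b)
    (hg : ContinuousOn g (Set.Ioo a b)) (ha : Filter.Tendsto g (𝓝[Set.Ioo a b] a) (𝓝 la))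
    (hb : Filter.Tendsto g (𝓝[Set.Ioo a b] b) (𝓝 lb)) :
    BddAbove ((fun y ↦ |g y|) '' Set.Ioo a b) := by
  rw [nhdsWithin_Ioo_eq_nhdsGT hab] at ha
  rw [nhdsWithin_Ioo_eq_nhdsLT hab] at hb
  have hext := continuousOn_Icc_extendFrom_Ioo hg ha hb
  refine (isCompact_Icc.bddAbove_image hext.abs).mono ?_
  rintro _ ⟨y, hy, rfl⟩
  exact ⟨y, Set.Ioo_subset_Icc_self hy, by simp only [extendFrom_extends hg y hy]⟩

theorem jacobi_weighted_bernstein_sum_le {α β : ℝ} (hα : 0 ≤ α) (hβ : 0 ≤ β) {f : ℝ → ℝ} {M : ℝ}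
    (hM : ∀ y ∈ Set.Ioo (0 : ℝ) 1, |y ^ α * (1 - y) ^ β * f y| ≤ M) (n : ℕ) {x : ℝ}
    (hx : x ∈ Set.Icc (0 : ℝ) 1) :
    x ^ α * (1 - x) ^ β * ∑ k ∈ Ico 1 n, |f (k / n)| * (n.choose k : ℝ) * x ^ k * (1 - x) ^ (n - k)
      ≤ (bernsteinMomentBound (2 * α) + bernsteinMomentBound (2 * β)) * M := by
  have hM0 : 0 ≤ M := (abs_nonneg _).trans (hM (1 / 2) (by norm_num))
  have h1x : 0 ≤ 1 - x := by linarith [hx.2]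
  have hx0 := hx.1
  set p : ℕ → ℝ := fun k ↦ (n.choose k : ℝ) * x ^ k * (1 - x) ^ (n - k)
  have hterm : ∀ k ∈ Ico 1 n,
      x ^ α * (1 - x) ^ β * (|f (k / n)| * (n.choose k : ℝ) * x ^ k * (1 - x) ^ (n - k))
        ≤ M * (p k * (n * x / k) ^ (2 * α) + p k * (n * (1 - x) / (n - k : ℕ)) ^ (2 * β)) := by
    intro k hk
    obtain ⟨hk1, hkn⟩ := mem_Ico.1 hk
    have hnode : (k / n : ℝ) ∈ Set.Ioo 0 1 := by
      have hn : (k : ℝ) < n := by exact_mod_cast hkn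
      have hk0 : (0 : ℝ) < k := by exact_mod_cast hk1
      exact ⟨div_pos hk0 (hk0.trans hn), (div_lt_one (hk0.trans hn)).2 hn⟩
    have hwnode : 0 ≤ (k / n : ℝ) ^ α * (1 - k / n : ℝ) ^ β :=
      mul_nonneg (rpow_nonneg hnode.1.le α) (rpow_nonneg (by linarith [hnode.2]) β)
    have hAB := rpow_mul_rpow_le_rpow_two_mul_add (s := n * x / k)
      (t := n * (1 - x) / (n - k : ℕ)) (by positivity) (by positivity) α β
    have hp : 0 ≤ p k := by positivity
    rw [jacobi_weight_eq_mul_weight_node α β hk hx]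
    calc (n * x / k : ℝ) ^ α * (n * (1 - x) / (n - k : ℕ) : ℝ) ^ β
          * ((k / n : ℝ) ^ α * (1 - k / n : ℝ) ^ β)
          * (|f (k / n)| * (n.choose k : ℝ) * x ^ k * (1 - x) ^ (n - k))
        = (n * x / k : ℝ) ^ α * (n * (1 - x) / (n - k : ℕ) : ℝ) ^ β
          * |(k / n : ℝ) ^ α * (1 - k / n : ℝ) ^ β * f (k / n)| * p k := by
          rw [abs_mul, abs_of_nonneg hwnode]; ring
      _ ≤ ((n * x / k) ^ (2 * α) + (n * (1 - x) / (n - k : ℕ)) ^ (2 * β)) * M * p k := by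
          gcongr
          exact hM _ hnode
      _ = _ := by ring
  calc x ^ α * (1 - x) ^ β
        * ∑ k ∈ Ico 1 n, |f (k / n)| * (n.choose k : ℝ) * x ^ k * (1 - x) ^ (n - k)
      ≤ ∑ k ∈ Ico 1 n,
          M * (p k * (n * x / k) ^ (2 * α) + p k * (n * (1 - x) / (n - k : ℕ)) ^ (2 * β)) := by
        rw [mul_sum]; exact sum_le_sum hterm
    _ = M * (∑ k ∈ Ico 1 n, p k * (n * x / k) ^ (2 * α)
          + ∑ k ∈ Ico 1 n, p k * (n * (1 - x) / (n - k : ℕ)) ^ (2 * β)) := by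
        rw [← mul_sum, sum_add_distrib]
    _ ≤ M * (bernsteinMomentBound (2 * α) + bernsteinMomentBound (2 * β)) := by
        gcongr
        · exact sum_bernstein_mul_rpow_le (by positivity) n hx
        · exact sum_bernstein_mul_rpow_le' (by positivity) n hx
    _ = _ := mul_comm _ _

theorem weighted_truncated_bernstein_bound (α β : ℝ) (hα : 0 < α) (hβ : 0 < β) :
    ∃ C > 0, ∀ f : ℝ → ℝ, ContinuousOn f (Set.Ioo 0 1) →
      Filter.Tendsto (fun y => y^α*(1-y)^β * f y) (nhdsWithin 0 (Set.Ioo 0 1)) (nhds 0) →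
      Filter.Tendsto (fun y => y^α*(1-y)^β * f y) (nhdsWithin 1 (Set.Ioo 0 1)) (nhds 0) →
      ∀ n : ℕ, 1 ≤ n → ∀ x ∈ Set.Ioo (0:ℝ) 1,
        x^α*(1-x)^β * ∑ k ∈ Finset.Ico 1 n,
            |f ((k:ℝ)/n)| * (n.choose k : ℝ) * x^k * (1-x)^(n-k)
          ≤ C * sSup ((fun y => |y^α*(1-y)^β * f y|) '' Set.Ioo (0:ℝ) 1) := by
  refine ⟨bernsteinMomentBound (2 * α) + bernsteinMomentBound (2 * β),
    add_pos (bernsteinMomentBound_pos _) (bernsteinMomentBound_pos _), ?_⟩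
  intro f hf h0 h1 n _ x hx
  have hweighted : ContinuousOn (fun y ↦ y ^ α * (1 - y) ^ β * f y) (Set.Ioo 0 1) := by
    refine ContinuousOn.mul (ContinuousOn.mul ?_ ?_) hf
    · exact continuousOn_id.rpow_const fun y hy ↦ Or.inl hy.1.ne'
    · exact (continuousOn_const.sub continuousOn_id).rpow_const
        fun y hy ↦ Or.inl (sub_pos.2 hy.2).ne'
  have hbdd := bddAbove_abs_image_Ioo one_pos hweighted h0 h1
  exact jacobi_weighted_bernstein_sum_le hα.le hβ.le (fun y hy ↦ le_csSup hbdd ⟨y, hy, rfl⟩) n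
    (Set.Ioo_subset_Icc_self hx)
end

section
/- Let w(x) = x^α(1-x)^β with α, β > 0. For every r ≥ 1 there is C > 0 such that for all n ≥ 2 and x ∈ (0,1): Σ_{k=0}^{n−r} (w φ₂^r)^{-1}(k*/n) p_{n−r,k}(x) ≤ C (w(x) φ₂^r(x))^{-1}, where φ₂(x) = x^{β₀}(1-x)^{β₁} with β₀, β₁ ≥ 1/2, and k* = 1 if k = 0, k* = n−r−1 if k = n−r, and k* = k otherwise. -/
open Finset Real Polynomial
open scoped Nat

/-!
With `u = α + rβ₀` and `v = β + rβ₁` both sides involve the single weight `y ↦ y^u (1-y)^v`.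
For the node `y = k*/n` and an integer `s ≥ u, v` we have
`(x/y)^u ((1-x)/(1-y))^v ≤ (1 + (x/y)^s) (1 + ((1-x)/(1-y))^s)`. After multiplying by
`p_{m,k}(x)`, `m = n - r`, the term `(x/y)^s p_{m,k}(x)` is at most `(3(r+1))^s s!` times
`p_{m+s,k+s}(x)`, because `n^s C(m,k) ≤ (3(r+1))^s s! (k*)^s C(m+s,k+s)` as soon as
`k + 1 ≤ 3k*` and `n ≤ (r+1)(m+1)`; symmetrically for `1 - x`. Summing over `k`, the Bernstein
basis being a partition of unity bounds the sum by `(1 + (3(r+1))^s s!)^2 (x^u (1-x)^v)⁻¹`.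
-/

theorem Nat.pow_mul_choose_le_of_le_mul {a c j k q n : ℕ} (hj : k + 1 ≤ c * j)
    (hn : n ≤ a * (k + q + 1)) (s : ℕ) :
    n ^ s * (k + q).choose k ≤ (a * c) ^ s * s ! * j ^ s * (k + q + s).choose (k + s) := by
  induction s with
  | zero => simp
  | succ s ih =>
    have hstep : n * (k + s + 1) ≤ a * c * (s + 1) * j * (k + q + s + 1) := by
      have hn' : n ≤ a * (k + q + s + 1) := hn.trans (Nat.mul_le_mul_left _ (by omega))
      have hk : k + s + 1 ≤ (s + 1) * (c * j) :=
        (show k + s + 1 ≤ (s + 1) * (k + 1) by nlinarith).trans (Nat.mul_le_mul_left _ hj)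
      calc n * (k + s + 1) ≤ a * (k + q + s + 1) * ((s + 1) * (c * j)) := Nat.mul_le_mul hn' hk
        _ = _ := by ring
    rw [← add_assoc, ← add_assoc]
    refine Nat.le_of_mul_le_mul_right ?_ (show 0 < k + s + 1 by omega)
    calc n ^ (s + 1) * (k + q).choose k * (k + s + 1)
        = n * (k + s + 1) * (n ^ s * (k + q).choose k) := by ring
      _ ≤ a * c * (s + 1) * j * (k + q + s + 1) *
            ((a * c) ^ s * s ! * j ^ s * (k + q + s).choose (k + s)) := Nat.mul_le_mul hstep ih
      _ = (a * c) ^ (s + 1) * (s + 1)! * j ^ (s + 1) *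
            ((k + q + s + 1) * (k + q + s).choose (k + s)) := by
        rw [Nat.factorial_succ]; ring
      _ = _ := by rw [Nat.add_one_mul_choose_eq]; ring

lemma rpow_le_one_add_pow {t u : ℝ} (ht : 0 ≤ t) (hu : 0 ≤ u) {s : ℕ} (hus : u ≤ s) :
    t ^ u ≤ 1 + t ^ s := by
  rcases le_total t 1 with h | h
  · linarith [rpow_le_one ht h hu, pow_nonneg ht s]
  · have := rpow_le_rpow_of_exponent_le h hus
    rw [rpow_natCast] at this
    linarith

lemma rpow_mul_rpow_pow {y : ℝ} (hy : 0 ≤ y) {a b : ℝ} {r : ℕ} (h : a + b * r ≠ 0) :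
    y ^ a * (y ^ b) ^ r = y ^ (a + b * r) := by
  rw [← rpow_natCast, ← rpow_mul hy, rpow_add' hy h]

lemma bernsteinPolynomial_eval_nonneg (m k : ℕ) {x : ℝ} (hx0 : 0 ≤ x) (hx1 : x ≤ 1) :
    0 ≤ (bernsteinPolynomial ℝ m k).eval x := by
  have : 0 ≤ 1 - x := sub_nonneg.2 hx1
  simp only [bernsteinPolynomial, eval_mul, eval_pow, eval_sub, eval_one, eval_X, eval_natCast]
  positivity

lemma bernsteinPolynomial_eval_one_sub (k q : ℕ) (x : ℝ) :
    (bernsteinPolynomial ℝ (k + q) k).eval (1 - x) = (bernsteinPolynomial ℝ (q + k) q).eval x := by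
  simp only [bernsteinPolynomial, eval_mul, eval_natCast, eval_pow, eval_X, eval_sub, eval_one,
    sub_sub_cancel, add_comm q k, add_tsub_cancel_left, add_tsub_cancel_right]
  rw [Nat.choose_symm_add]
  ring

lemma sum_bernsteinPolynomial_eval_add_le {m t M : ℕ} (h : m + t ≤ M) {x : ℝ} (hx0 : 0 ≤ x)
    (hx1 : x ≤ 1) : ∑ k ∈ range (m + 1), (bernsteinPolynomial ℝ M (k + t)).eval x ≤ 1 := by
  have hp := fun k => bernsteinPolynomial_eval_nonneg M k hx0 hx1
  calc ∑ k ∈ range (m + 1), (bernsteinPolynomial ℝ M (k + t)).eval x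
      ≤ ∑ k ∈ range t, (bernsteinPolynomial ℝ M k).eval x
          + ∑ k ∈ range (m + 1), (bernsteinPolynomial ℝ M (t + k)).eval x := by
        simp only [add_comm _ t]
        exact le_add_of_nonneg_left (sum_nonneg fun k _ => hp k)
    _ = ∑ k ∈ range (t + (m + 1)), (bernsteinPolynomial ℝ M k).eval x := (sum_range_add ..).symm
    _ ≤ ∑ k ∈ range (M + 1), (bernsteinPolynomial ℝ M k).eval x :=
        sum_le_sum_of_subset_of_nonneg (range_subset_range.2 (by omega)) fun k _ _ => hp k
    _ = 1 := by rw [← eval_finsetSum, bernsteinPolynomial.sum, eval_one]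

lemma pow_mul_bernsteinPolynomial_eval_le {a c j k q n : ℕ} (hj : k + 1 ≤ c * j)
    (hn : n ≤ a * (k + q + 1)) (s : ℕ) {x : ℝ} (hx0 : 0 ≤ x) (hx1 : x ≤ 1) :
    (n * x / j) ^ s * (bernsteinPolynomial ℝ (k + q) k).eval x
      ≤ ((a * c) ^ s * s ! : ℕ) * (bernsteinPolynomial ℝ (k + q + s) (k + s)).eval x := by
  have hj0 : (0 : ℝ) < j := by
    exact_mod_cast Nat.pos_of_ne_zero fun h => by simp [h] at hj
  have hchoose : (n ^ s * (k + q).choose k : ℝ)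
      ≤ ((a * c) ^ s * s ! : ℕ) * j ^ s * (k + q + s).choose (k + s) := by
    exact_mod_cast Nat.pow_mul_choose_le_of_le_mul hj hn s
  have hq : k + q + s - (k + s) = q := by omega
  have h1x : 0 ≤ 1 - x := sub_nonneg.2 hx1
  simp only [bernsteinPolynomial, eval_mul, eval_pow, eval_sub, eval_one, eval_X, eval_natCast,
    Nat.add_sub_cancel_left, hq]
  calc (n * x / j) ^ s * ((k + q).choose k * x ^ k * (1 - x) ^ q)
      = n ^ s * (k + q).choose k * (x ^ (k + s) * (1 - x) ^ q) / j ^ s := by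
        rw [div_pow, mul_pow, pow_add]; ring
    _ ≤ ((a * c) ^ s * s ! : ℕ) * j ^ s * (k + q + s).choose (k + s)
          * (x ^ (k + s) * (1 - x) ^ q) / j ^ s := by gcongr
    _ = _ := by field_simp

lemma pow_mul_bernsteinPolynomial_eval_le' {a c d k q n : ℕ} (hd : q + 1 ≤ c * d)
    (hn : n ≤ a * (k + q + 1)) (s : ℕ) {x : ℝ} (hx0 : 0 ≤ x) (hx1 : x ≤ 1) :
    (n * (1 - x) / d) ^ s * (bernsteinPolynomial ℝ (k + q) k).eval x
      ≤ ((a * c) ^ s * s ! : ℕ) * (bernsteinPolynomial ℝ (k + q + s) k).eval x := by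
  have h := pow_mul_bernsteinPolynomial_eval_le (k := q) (q := k) hd (hn.trans_eq (by ring)) s
    (sub_nonneg.2 hx1) (sub_le_self 1 hx0)
  rwa [bernsteinPolynomial_eval_one_sub q k, add_right_comm q k s,
    bernsteinPolynomial_eval_one_sub (q + s) k, ← add_assoc] at h

/-- The expansion of `(1 + A) (1 + B) p_{m,k}(x)` once `A p_{m,k}(x)` and `B p_{m,k}(x)` have been
replaced by their bounds `K p_{m+s,k+s}(x)` and `K p_{m+s,k}(x)`. -/
noncomputable def bernsteinMajorant (K : ℝ) (s m k : ℕ) (x : ℝ) : ℝ :=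
  (bernsteinPolynomial ℝ m k).eval x + K * (bernsteinPolynomial ℝ (m + s) (k + s)).eval x
    + K * (bernsteinPolynomial ℝ (m + s) k).eval x
    + K ^ 2 * (bernsteinPolynomial ℝ (m + 2 * s) (k + s)).eval x

lemma bernsteinMajorant_nonneg {K : ℝ} (hK : 0 ≤ K) (s m k : ℕ) {x : ℝ} (hx0 : 0 ≤ x)
    (hx1 : x ≤ 1) : 0 ≤ bernsteinMajorant K s m k x := by
  have hp := fun m k => bernsteinPolynomial_eval_nonneg m k hx0 hx1
  unfold bernsteinMajorant
  exact add_nonneg (add_nonneg (add_nonneg (hp _ _) (mul_nonneg hK (hp _ _)))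
    (mul_nonneg hK (hp _ _))) (mul_nonneg (sq_nonneg K) (hp _ _))

lemma inv_weight_mul_bernsteinPolynomial_eval_le {u v : ℝ} {a c s j k m n : ℕ}
    (hu : 0 ≤ u) (hus : u ≤ s) (hv : 0 ≤ v) (hvs : v ≤ s) (hkm : k ≤ m) (hjn : j ≤ n)
    (hj : k + 1 ≤ c * j) (hd : m - k + 1 ≤ c * (n - j)) (hn : n ≤ a * (m + 1))
    {x : ℝ} (hx0 : 0 < x) (hx1 : x < 1) :
    (((j : ℝ) / n) ^ u * (1 - (j : ℝ) / n) ^ v)⁻¹ * (bernsteinPolynomial ℝ m k).eval x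
      ≤ (x ^ u * (1 - x) ^ v)⁻¹ * bernsteinMajorant ((a * c) ^ s * s ! : ℕ) s m k x := by
  obtain ⟨q, rfl⟩ := Nat.exists_eq_add_of_le hkm
  obtain ⟨d, rfl⟩ := Nat.exists_eq_add_of_le hjn
  simp only [Nat.add_sub_cancel_left] at hd
  set K : ℝ := (((a * c) ^ s * s ! : ℕ) : ℝ)
  set p := (bernsteinPolynomial ℝ (k + q) k).eval x
  set A := (((j + d : ℕ) : ℝ) * x / j) ^ s
  set B := (((j + d : ℕ) : ℝ) * (1 - x) / d) ^ s
  have hx1' : 0 < 1 - x := sub_pos.2 hx1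
  have hj0 : (0 : ℝ) < j := by exact_mod_cast Nat.pos_of_ne_zero fun h => by simp [h] at hj
  have hd0 : (0 : ℝ) < d := by exact_mod_cast Nat.pos_of_ne_zero fun h => by simp [h] at hd
  have hp : 0 ≤ p := bernsteinPolynomial_eval_nonneg _ _ hx0.le hx1.le
  have hA : A * p ≤ K * (bernsteinPolynomial ℝ (k + q + s) (k + s)).eval x :=
    pow_mul_bernsteinPolynomial_eval_le hj hn s hx0.le hx1.le
  have hB : B * p ≤ K * (bernsteinPolynomial ℝ (k + q + s) k).eval x :=
    pow_mul_bernsteinPolynomial_eval_le' hd hn s hx0.le hx1.le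
  have hAB : A * (B * p) ≤ K ^ 2 * (bernsteinPolynomial ℝ (k + q + 2 * s) (k + s)).eval x := by
    have hn' : j + d ≤ a * (k + (q + s) + 1) := hn.trans (Nat.mul_le_mul_left _ (by omega))
    calc A * (B * p) ≤ A * (K * (bernsteinPolynomial ℝ (k + (q + s)) k).eval x) := by
          rw [← add_assoc]; gcongr
      _ = K * (A * (bernsteinPolynomial ℝ (k + (q + s)) k).eval x) := by ring
      _ ≤ K * (K * (bernsteinPolynomial ℝ (k + (q + s) + s) (k + s)).eval x) :=
          mul_le_mul_of_nonneg_left (pow_mul_bernsteinPolynomial_eval_le hj hn' s hx0.le hx1.le)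
            (Nat.cast_nonneg _)
      _ = _ := by rw [show k + (q + s) + s = k + q + 2 * s by ring]; ring
  have hratio : (((j : ℝ) / (j + d : ℕ)) ^ u * (1 - (j : ℝ) / (j + d : ℕ)) ^ v)⁻¹
      = (x ^ u * (1 - x) ^ v)⁻¹ * ((((j + d : ℕ) : ℝ) * x / j) ^ u
          * (((j + d : ℕ) : ℝ) * (1 - x) / d) ^ v) := by
    push_cast
    rw [show 1 - (j : ℝ) / (j + d) = d / (j + d) by field_simp; ring]
    rw [mul_div_assoc, mul_div_assoc, mul_rpow, mul_rpow, div_rpow, div_rpow, div_rpow, div_rpow]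
    · field_simp
    all_goals positivity
  have hsplit : (((j + d : ℕ) : ℝ) * x / j) ^ u * (((j + d : ℕ) : ℝ) * (1 - x) / d) ^ v
      ≤ (1 + A) * (1 + B) := by
    gcongr
    · exact rpow_le_one_add_pow (by positivity) hu hus
    · exact rpow_le_one_add_pow (by positivity) hv hvs
  rw [hratio, mul_assoc]
  gcongr
  calc _ ≤ (1 + A) * (1 + B) * p := by gcongr
    _ = p + A * p + B * p + A * (B * p) := by ring
    _ ≤ _ := by unfold bernsteinMajorant; gcongr

lemma sum_bernsteinMajorant_le {K : ℝ} (hK : 0 ≤ K) (s m : ℕ) {x : ℝ} (hx0 : 0 ≤ x)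
    (hx1 : x ≤ 1) : ∑ k ∈ range (m + 1), bernsteinMajorant K s m k x ≤ (1 + K) ^ 2 := by
  have h₀ := sum_bernsteinPolynomial_eval_add_le (t := 0) (le_refl m) hx0 hx1
  have h₁ := sum_bernsteinPolynomial_eval_add_le (le_refl (m + s)) hx0 hx1
  have h₂ := sum_bernsteinPolynomial_eval_add_le (t := 0) (show m + 0 ≤ m + s by omega) hx0 hx1
  have h₃ := sum_bernsteinPolynomial_eval_add_le (show m + s ≤ m + 2 * s by omega) hx0 hx1
  simp only [add_zero] at h₀ h₂
  simp only [bernsteinMajorant, sum_add_distrib, ← mul_sum]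
  calc _ ≤ 1 + K * 1 + K * 1 + K ^ 2 * 1 := by gcongr
    _ = (1 + K) ^ 2 := by ring

def kstar (m k : ℕ) : ℕ := if k = 0 then 1 else if k = m then m - 1 else k

lemma inv_weight_kstar_mul_bernsteinPolynomial_eval_le {u v : ℝ} {s r n m k : ℕ}
    (hu : 0 < u) (hus : u ≤ s) (hv : 0 ≤ v) (hvs : v ≤ s) (hn : 2 ≤ n) (hmn : m ≤ n)
    (hnm : n ≤ m + r) (hk : k ≤ m) {x : ℝ} (hx0 : 0 < x) (hx1 : x < 1) :
    (((kstar m k : ℝ) / n) ^ u * (1 - (kstar m k : ℝ) / n) ^ v)⁻¹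
        * (bernsteinPolynomial ℝ m k).eval x
      ≤ (x ^ u * (1 - x) ^ v)⁻¹ * bernsteinMajorant (((r + 1) * 3) ^ s * s ! : ℕ) s m k x := by
  rcases eq_or_ne (kstar m k) 0 with h | h
  -- `kstar m k = 0` only for `k = m = 1`; then the weight vanishes and its inverse is `0`.
  · have : 0 < 1 - x := sub_pos.2 hx1
    simp only [h, CharP.cast_eq_zero, zero_div, zero_rpow hu.ne', zero_mul, inv_zero]
    exact mul_nonneg (by positivity)
      (bernsteinMajorant_nonneg (Nat.cast_nonneg _) s m k hx0.le hx1.le)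
  · refine inv_weight_mul_bernsteinPolynomial_eval_le hu.le hus hv hvs hk ?_ ?_ ?_
      (by nlinarith) hx0 hx1 <;> unfold kstar at h ⊢ <;> split_ifs at h ⊢ <;> omega

lemma rpow_mul_one_sub_rpow_mul_pow {α β β₀ β₁ : ℝ} {r : ℕ} (hu : α + β₀ * r ≠ 0)
    (hv : β + β₁ * r ≠ 0) {y : ℝ} (hy0 : 0 ≤ y) (hy1 : y ≤ 1) :
    y ^ α * (1 - y) ^ β * (y ^ β₀ * (1 - y) ^ β₁) ^ r
      = y ^ (α + β₀ * r) * (1 - y) ^ (β + β₁ * r) := by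
  rw [← rpow_mul_rpow_pow hy0 hu, ← rpow_mul_rpow_pow (sub_nonneg.2 hy1) hv]
  ring

theorem weighted_bernstein_sum_kstar_bound_general (α β β₀ β₁ : ℝ) (hα : 0 < α) (hβ : 0 < β)
    (h0 : 1/2 ≤ β₀) (h1 : 1/2 ≤ β₁) (r : ℕ) :
    ∃ C > 0, ∀ n : ℕ, 2 ≤ n → ∀ x ∈ Set.Ioo (0:ℝ) 1,
      ∑ k ∈ Finset.range (n-r+1),
        (let ks : ℕ := if k = 0 then 1 else if k = n - r then n - r - 1 else k;
          (((ks:ℝ)/n)^α * (1-(ks:ℝ)/n)^β * (((ks:ℝ)/n)^β₀ * (1-(ks:ℝ)/n)^β₁)^r)⁻¹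
            * ((n-r).choose k : ℝ) * x^k * (1-x)^(n-r-k))
      ≤ C * (x^α*(1-x)^β * (x^β₀*(1-x)^β₁)^r)⁻¹ := by
  set u := α + β₀ * r
  set v := β + β₁ * r
  have hu : 0 < u := by positivity
  have hv : 0 < v := by positivity
  set s := ⌈max u v⌉₊
  have hus : u ≤ s := (le_max_left u v).trans (Nat.le_ceil _)
  have hvs : v ≤ s := (le_max_right u v).trans (Nat.le_ceil _)
  set K : ℕ := (((r + 1) * 3) ^ s * s !)
  have hw {y : ℝ} (hy0 : 0 ≤ y) (hy1 : y ≤ 1) :=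
    rpow_mul_one_sub_rpow_mul_pow (β₁ := β₁) (r := r) hu.ne' hv.ne' hy0 hy1
  refine ⟨(1 + K) ^ 2, by positivity, fun n hn x ⟨hx0, hx1⟩ => ?_⟩
  rw [hw hx0.le hx1.le]
  calc _ = ∑ k ∈ range (n - r + 1), (((kstar (n - r) k : ℝ) / n) ^ u
          * (1 - (kstar (n - r) k : ℝ) / n) ^ v)⁻¹ * (bernsteinPolynomial ℝ (n - r) k).eval x := by
        refine sum_congr rfl fun k hk => ?_
        have hks : kstar (n - r) k ≤ n := by
          rw [mem_range] at hk; unfold kstar; split_ifs <;> omega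
        dsimp only
        rw [show (if k = 0 then 1 else if k = n - r then n - r - 1 else k) = kstar (n - r) k from rfl,
          hw (by positivity) (div_le_one_of_le₀ (by exact_mod_cast hks) (by positivity))]
        simp only [bernsteinPolynomial, eval_mul, eval_pow, eval_sub, eval_one, eval_X,
          eval_natCast]
        ring
    _ ≤ ∑ k ∈ range (n - r + 1), (x ^ u * (1 - x) ^ v)⁻¹ * bernsteinMajorant K s (n - r) k x :=
        sum_le_sum fun k hk => inv_weight_kstar_mul_bernsteinPolynomial_eval_le hu hus hv.le hvs
          hn (Nat.sub_le n r) (by omega) (Nat.lt_succ_iff.1 (mem_range.1 hk)) hx0 hx1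
    _ ≤ (x ^ u * (1 - x) ^ v)⁻¹ * (1 + K) ^ 2 := by
        rw [← mul_sum]
        gcongr
        exact sum_bernsteinMajorant_le (Nat.cast_nonneg _) s _ hx0.le hx1.le
    _ = _ := mul_comm _ _

theorem weighted_bernstein_sum_kstar_bound (α β β₀ β₁ : ℝ) (hα : 0 < α) (hβ : 0 < β)
    (h0 : 1/2 ≤ β₀) (h1 : 1/2 ≤ β₁) (r : ℕ) (hr : 1 ≤ r) :
    ∃ C > 0, ∀ n : ℕ, 2 ≤ n → ∀ x ∈ Set.Ioo (0:ℝ) 1,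
      ∑ k ∈ Finset.range (n-r+1),
        (let ks : ℕ := if k = 0 then 1 else if k = n - r then n - r - 1 else k;
          (((ks:ℝ)/n)^α * (1-(ks:ℝ)/n)^β * (((ks:ℝ)/n)^β₀ * (1-(ks:ℝ)/n)^β₁)^r)⁻¹
            * ((n-r).choose k : ℝ) * x^k * (1-x)^(n-r-k))
      ≤ C * (x^α*(1-x)^β * (x^β₀*(1-x)^β₁)^r)⁻¹ :=
  weighted_bernstein_sum_kstar_bound_general α β β₀ β₁ hα hβ h0 h1 r
end
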